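/- Let n ≥ 1, l ∈ ℕ and 0 < q < p ≤ 1. Then for every real x, ∑_{ν=0}^{n+l} s_{n,l,ν}^{p,q}(x) = 1. -/
import Mathlib


open Finset

/-- The (p,q)-integer `[k]_{p,q} = (p^k - q^k)/(p - q)`. -/
noncomputable def pqInt (p q : ℝ) (k : ℕ) : ℝ := (p ^ k - q ^ k) / (p - q)

/-- The (p,q)-factorial `[n]_{p,q}! = ∏_{k=1}^n [k]_{p,q}`. -/
noncomputable def pqFact (p q : ℝ) (n : ℕ) : ℝ := ∏ k ∈ Finset.Icc 1 n, pqInt p q k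

/-- The (p,q)-binomial coefficient `C(n,k)_{p,q}`. -/
noncomputable def pqBinom (p q : ℝ) (n k : ℕ) : ℝ :=
  pqFact p q n / (pqFact p q k * pqFact p q (n - k))

variable {p q x : ℝ}

lemma pqInt_pos (hq : 0 < q) (hqp : q < p) {k : ℕ} (hk : k ≠ 0) : 0 < pqInt p q k := by
  have h : q ^ k < p ^ k := pow_lt_pow_left₀ hqp hq.le hk
  exact div_pos (by linarith) (by linarith)

lemma pqFact_pos (hq : 0 < q) (hqp : q < p) (n : ℕ) : 0 < pqFact p q n :=
  Finset.prod_pos fun k hk => pqInt_pos hq hqp (by have := (Finset.mem_Icc.mp hk).1; omega)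

lemma pqFact_succ (p q : ℝ) (n : ℕ) : pqFact p q (n+1) = pqFact p q n * pqInt p q (n+1) :=
  Finset.prod_Icc_succ_top (by omega) _

lemma pqInt_add (hqp : q < p) (a b : ℕ) :
    pqInt p q (a + b) = p ^ a * pqInt p q b + q ^ b * pqInt p q a := by
  have h : p - q ≠ 0 := sub_ne_zero.2 (ne_of_gt hqp)
  unfold pqInt
  rw [pow_add, pow_add]
  field_simp
  ring

lemma pqBinom_zero (hq : 0 < q) (hqp : q < p) (m : ℕ) : pqBinom p q m 0 = 1 := by
  unfold pqBinom
  rw [Nat.sub_zero]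
  have h0 : pqFact p q 0 = 1 := by unfold pqFact; simp
  rw [h0, one_mul, div_self (ne_of_gt (pqFact_pos hq hqp m))]

lemma pqBinom_self (hq : 0 < q) (hqp : q < p) (m : ℕ) : pqBinom p q m m = 1 := by
  unfold pqBinom
  rw [Nat.sub_self]
  have h0 : pqFact p q 0 = 1 := by unfold pqFact; simp
  rw [h0, mul_one, div_self (ne_of_gt (pqFact_pos hq hqp m))]

lemma pascal (hq : 0 < q) (hqp : q < p) (ν k : ℕ) :
    pqBinom p q (ν+k+2) (ν+1)
      = p ^ (ν+1) * pqBinom p q (ν+k+1) (ν+1) + q ^ (k+1) * pqBinom p q (ν+k+1) ν := by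
  unfold pqBinom
  rw [show ν+k+2-(ν+1) = k+1 from by omega, show ν+k+1-(ν+1) = k from by omega,
    show ν+k+1-ν = k+1 from by omega,
    show ν+k+2 = (ν+k+1)+1 from rfl, pqFact_succ, pqFact_succ p q k, pqFact_succ p q ν]
  have hI : pqInt p q (ν+k+1+1) = p ^ (ν+1) * pqInt p q (k+1) + q ^ (k+1) * pqInt p q (ν+1) := by
    have := pqInt_add (p := p) (q := q) hqp (ν+1) (k+1)
    rw [show (ν+1)+(k+1) = ν+k+1+1 from by omega] at this
    exact this
  rw [hI]
  have h1 : pqFact p q ν ≠ 0 := ne_of_gt (pqFact_pos hq hqp ν)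
  have h2 : pqFact p q k ≠ 0 := ne_of_gt (pqFact_pos hq hqp k)
  have h3 : pqFact p q (ν+k+1) ≠ 0 := ne_of_gt (pqFact_pos hq hqp _)
  have h4 : pqInt p q (ν+1) ≠ 0 := ne_of_gt (pqInt_pos hq hqp (by omega))
  have h5 : pqInt p q (k+1) ≠ 0 := ne_of_gt (pqInt_pos hq hqp (by omega))
  field_simp

lemma tri (ν : ℕ) : (ν+1)*ν/2 = ν*(ν-1)/2 + ν := by
  have h := Finset.sum_range_succ (fun i => i) ν
  rw [Finset.sum_range_id, Finset.sum_range_id] at h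
  simpa using h

lemma key (hq : 0 < q) (hqp : q < p) (x : ℝ) (m : ℕ) :
    ∑ ν ∈ Finset.range (m+1), pqBinom p q m ν * p ^ (ν*(ν-1)/2) * x ^ ν *
      ∏ j ∈ Finset.range (m - ν), (p ^ j - q ^ j * x) = p ^ (m*(m-1)/2) := by
  induction m with
  | zero => simp [pqBinom_zero hq hqp]
  | succ m ih =>
    set f : ℕ → ℝ := fun ν => pqBinom p q m ν * p ^ (ν*(ν-1)/2) * x ^ ν *
      ∏ j ∈ Finset.range (m - ν), (p ^ j - q ^ j * x) with hf
    have h1 : pqBinom p q (m+1) 0 * p ^ (0*(0-1)/2) * x ^ 0 *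
        ∏ j ∈ Finset.range (m+1-0), (p ^ j - q ^ j * x)
        = f 0 * (p ^ m - p ^ 0 * q ^ (m-0) * x) := by
      simp only [hf]
      rw [pqBinom_zero hq hqp, pqBinom_zero hq hqp, Nat.sub_zero, Nat.sub_zero,
        Finset.prod_range_succ]
      ring
    have h2 : pqBinom p q (m+1) (m+1) * p ^ ((m+1)*((m+1)-1)/2) * x ^ (m+1) *
        ∏ j ∈ Finset.range (m+1-(m+1)), (p ^ j - q ^ j * x)
        = q ^ (m-m) * p ^ m * x * f m := by
      rw [pqBinom_self hq hqp]
      simp only [hf, Nat.sub_self, Nat.add_sub_cancel, pqBinom_self hq hqp,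
        Finset.range_zero, Finset.prod_empty]
      rw [tri]
      ring
    have h3 : ∀ ν ∈ Finset.range m,
        pqBinom p q (m+1) (ν+1) * p ^ ((ν+1)*((ν+1)-1)/2) * x ^ (ν+1) *
          ∏ j ∈ Finset.range (m+1-(ν+1)), (p ^ j - q ^ j * x)
        = f (ν+1) * (p ^ m - p ^ (ν+1) * q ^ (m-(ν+1)) * x) + q ^ (m-ν) * p ^ ν * x * f ν := by
      intro ν hν
      rw [Finset.mem_range] at hν
      obtain ⟨k, rfl⟩ : ∃ k, m = ν + k + 1 := ⟨m - ν - 1, by omega⟩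
      rw [show ν+k+1+1 = ν+k+2 from rfl, pascal hq hqp ν k,
        show ν+k+2-(ν+1) = k+1 from by omega]
      simp only [hf, Nat.add_sub_cancel, show ν+k+1-(ν+1) = k from by omega,
        show ν+k+1-ν = k+1 from by omega]
      rw [Finset.prod_range_succ, tri,
        show p ^ (ν+k+1) = p ^ (ν+1) * p ^ k from by rw [← pow_add]; congr 1; omega,
        pow_add p (ν*(ν-1)/2) ν]
      ring
    rw [Finset.sum_range_succ' _ (m+1), Finset.sum_range_succ _ m, h1, h2,
      Finset.sum_congr rfl h3, Finset.sum_add_distrib]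
    have hA := Finset.sum_range_succ' (fun ν => f ν * (p ^ m - p ^ ν * q ^ (m-ν) * x)) m
    have hC := Finset.sum_range_succ (fun ν => q ^ (m-ν) * p ^ ν * x * f ν) m
    have hAC : ∑ ν ∈ Finset.range (m+1), (f ν * (p ^ m - p ^ ν * q ^ (m-ν) * x)
        + q ^ (m-ν) * p ^ ν * x * f ν) = p ^ ((m+1)*((m+1)-1)/2) := by
      rw [Finset.sum_congr rfl (fun ν _ => by ring :
        ∀ ν ∈ Finset.range (m+1), (f ν * (p ^ m - p ^ ν * q ^ (m-ν) * x)
          + q ^ (m-ν) * p ^ ν * x * f ν) = f ν * p ^ m), ← Finset.sum_mul]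
      rw [show (∑ ν ∈ Finset.range (m+1), f ν) = p ^ (m*(m-1)/2) from ih,
        ← pow_add, Nat.add_sub_cancel, ← tri m]
    rw [Finset.sum_add_distrib] at hAC
    linarith [hA, hC, hAC]

/-- The (p,q)-Schurer basis function `s_{n,l,ν}^{p,q}(x)`. -/
noncomputable def schurerBasis (p q : ℝ) (n l ν : ℕ) (x : ℝ) : ℝ :=
  (1 / p ^ ((n + l) * (n + l - 1) / 2)) * pqBinom p q (n + l) ν *
    p ^ (ν * (ν - 1) / 2) * x ^ ν * ∏ j ∈ Finset.range (n + l - ν), (p ^ j - q ^ j * x)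

/-- The Stancu node `T(ν) = (p^{n-ν}·[ν]_{p,q} + α)/([n]_{p,q} + β)`. -/
noncomputable def stancuNode (p q α β : ℝ) (n ν : ℕ) : ℝ :=
  (p ^ ((n : ℤ) - (ν : ℤ)) * pqInt p q ν + α) / (pqInt p q n + β)

/-- The bivariate (p,q)-Schurer–Stancu operator. -/
noncomputable def schurerStancu (n₁ n₂ l : ℕ) (p₁ q₁ α₁ β₁ p₂ q₂ α₂ β₂ : ℝ)
    (f : ℝ → ℝ → ℝ) (x₁ x₂ : ℝ) : ℝ :=
  ∑ ν₁ ∈ Finset.range (n₁ + l + 1), ∑ ν₂ ∈ Finset.range (n₂ + l + 1),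
    schurerBasis p₁ q₁ n₁ l ν₁ x₁ * schurerBasis p₂ q₂ n₂ l ν₂ x₂ *
      f (stancuNode p₁ q₁ α₁ β₁ n₁ ν₁) (stancuNode p₂ q₂ α₂ β₂ n₂ ν₂)

/-- The (p,q)-Schurer basis functions sum to 1: for `n ≥ 1`, `l ∈ ℕ`, `0 < q < p ≤ 1`
and every real `x`, `∑_{ν=0}^{n+l} s_{n,l,ν}^{p,q}(x) = 1`. -/
theorem schurer_basis_sum_eq_one (n l : ℕ) (hn : 1 ≤ n) (p q : ℝ)
    (hq : 0 < q) (hqp : q < p) (hp : p ≤ 1) (x : ℝ) :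
    ∑ ν ∈ Finset.range (n + l + 1), schurerBasis p q n l ν x = 1 := by
  have hp0 : 0 < p := hq.trans hqp
  have h := key hq hqp x (n + l)
  have step : ∑ ν ∈ Finset.range (n + l + 1), schurerBasis p q n l ν x
      = (1 / p ^ ((n + l) * (n + l - 1) / 2)) *
        ∑ ν ∈ Finset.range (n + l + 1), pqBinom p q (n + l) ν * p ^ (ν * (ν - 1) / 2) * x ^ ν *
          ∏ j ∈ Finset.range (n + l - ν), (p ^ j - q ^ j * x) := by
    rw [Finset.mul_sum]
    exact Finset.sum_congr rfl fun ν _ => by unfold schurerBasis; ring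
  rw [step, h, one_div, inv_mul_cancel₀ (pow_ne_zero _ (ne_of_gt hp0))]
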